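/- Suppose x, y, θ, p : ℝ × [0,ℓ] → ℝ are smooth and satisfy the free planar Cosserat rod equations ρẍ + Kx⁗ = (p x′)′, ρÿ + Ky⁗ = (p y′)′, αθ̈ − βθ″ = 0, together with the inextensibility constraint (x′)² + (y′)² = 1, on ℝ × [0,ℓ]. Then the local energy conservation law ∂/∂t [ (ρ/2)(ẋ² + ẏ²) + (α/2)θ̇² + (K/2)((x″)² + (y″)²) + (β/2)(θ′)² ] = ∂/∂s [ (p x′ − K x‴) ẋ + (p y′ − K y‴) ẏ + β θ′ θ̇ + K (x″ ẋ′ + y″ ẏ′) ] holds at every point of ℝ × [0,ℓ]. -/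

import Mathlib

/-!
Multiply the equations for x, y and θ by ẋ, ẏ and θ̇ and add them. Once mixed partial
derivatives are commuted (Clairaut), the time derivative of the energy density minus the
arclength derivative of the flux is exactly this combination minus p (x′ẋ′ + y′ẏ′), and the
last term vanishes because differentiating the inextensibility constraint (x′)² + (y′)² = 1 in
time gives x′ẋ′ + y′ẏ′ = 0.
-/

open MeasureTheory

/-- Partial derivative with respect to the first (time) variable. -/
noncomputable def pt (f : ℝ → ℝ → ℝ) : ℝ → ℝ → ℝ := fun t s => deriv (fun τ => f τ s) t

/-- Partial derivative with respect to the second (arclength) variable. -/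
noncomputable def ps (f : ℝ → ℝ → ℝ) : ℝ → ℝ → ℝ := fun t s => deriv (fun σ => f t σ) s

/-- Smoothness of a field of two real variables. -/
def Smooth2 (f : ℝ → ℝ → ℝ) : Prop := ContDiff ℝ (⊤ : ℕ∞) (fun p : ℝ × ℝ => f p.1 p.2)

/-- Energy density of the planar Cosserat rod. -/
noncomputable def Edens (ρ α β K : ℝ) (x y θ : ℝ → ℝ → ℝ) : ℝ → ℝ → ℝ := fun t s =>
  ρ / 2 * ((pt x t s) ^ 2 + (pt y t s) ^ 2) + α / 2 * (pt θ t s) ^ 2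
    + K / 2 * ((ps (ps x) t s) ^ 2 + (ps (ps y) t s) ^ 2) + β / 2 * (ps θ t s) ^ 2

namespace Smooth2

variable {f g : ℝ → ℝ → ℝ}

theorem differentiableAt (hf : Smooth2 f) (q : ℝ × ℝ) :
    DifferentiableAt ℝ (fun q : ℝ × ℝ => f q.1 q.2) q :=
  hf.differentiable (by simp) q

theorem hasDerivAt_pt (hf : Smooth2 f) (t s : ℝ) :
    HasDerivAt (fun τ => f τ s) (pt f t s) t := by
  have h : DifferentiableAt ℝ (fun τ => f τ s) t :=
    (hf.differentiableAt (t, s)).comp (f := fun τ => (τ, s)) t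
      (differentiableAt_id.prodMk (differentiableAt_const s))
  exact h.hasDerivAt

theorem hasDerivAt_ps (hf : Smooth2 f) (t s : ℝ) :
    HasDerivAt (fun σ => f t σ) (ps f t s) s := by
  have h : DifferentiableAt ℝ (fun σ => f t σ) s :=
    (hf.differentiableAt (t, s)).comp (f := fun σ => (t, σ)) s
      ((differentiableAt_const t).prodMk differentiableAt_id)
  exact h.hasDerivAt

theorem hasDerivAt_pt_sq (hf : Smooth2 f) (t s : ℝ) :
    HasDerivAt (fun τ => f τ s ^ 2) (2 * f t s * pt f t s) t := by
  simpa using (hf.hasDerivAt_pt t s).fun_pow 2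

theorem pt_eq_fderiv (hf : Smooth2 f) (t s : ℝ) :
    pt f t s = fderiv ℝ (fun q : ℝ × ℝ => f q.1 q.2) (t, s) (1, 0) := by
  have h : HasDerivAt (fun τ => f τ s) (fderiv ℝ (fun q : ℝ × ℝ => f q.1 q.2) (t, s) (1, 0)) t :=
    (hf.differentiableAt (t, s)).hasFDerivAt.comp_hasDerivAt (f := fun τ => (τ, s)) t
      ((hasDerivAt_id t).prodMk (hasDerivAt_const t s))
  exact h.deriv

theorem ps_eq_fderiv (hf : Smooth2 f) (t s : ℝ) :
    ps f t s = fderiv ℝ (fun q : ℝ × ℝ => f q.1 q.2) (t, s) (0, 1) := by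
  have h : HasDerivAt (fun σ => f t σ) (fderiv ℝ (fun q : ℝ × ℝ => f q.1 q.2) (t, s) (0, 1)) s :=
    (hf.differentiableAt (t, s)).hasFDerivAt.comp_hasDerivAt (f := fun σ => (t, σ)) s
      ((hasDerivAt_const s t).prodMk (hasDerivAt_id s))
  exact h.deriv

theorem contDiff_fderiv_apply (hf : Smooth2 f) (v : ℝ × ℝ) :
    ContDiff ℝ (⊤ : ℕ∞) (fun q : ℝ × ℝ => fderiv ℝ (fun q : ℝ × ℝ => f q.1 q.2) q v) :=
  (hf.fderiv_right (by exact_mod_cast le_top)).clm_apply contDiff_const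

protected theorem pt (hf : Smooth2 f) : Smooth2 (pt f) := by
  simpa only [Smooth2, hf.pt_eq_fderiv] using hf.contDiff_fderiv_apply (1, 0)

protected theorem ps (hf : Smooth2 f) : Smooth2 (ps f) := by
  simpa only [Smooth2, hf.ps_eq_fderiv] using hf.contDiff_fderiv_apply (0, 1)

theorem pt_ps_comm (hf : Smooth2 f) : pt (ps f) = ps (pt f) := by
  funext t s
  set F : ℝ × ℝ → ℝ := fun q => f q.1 q.2
  have hF' : HasFDerivAt (fderiv ℝ F) (fderiv ℝ (fderiv ℝ F) (t, s)) (t, s) :=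
    ((hf.fderiv_right (m := 1) (WithTop.coe_le_coe.mpr le_top)).differentiable one_ne_zero
      (t, s)).hasFDerivAt
  have hdir (v w : ℝ × ℝ) :
      fderiv ℝ (fun q => fderiv ℝ F q v) (t, s) w = fderiv ℝ (fderiv ℝ F) (t, s) w v := by
    simp [(hF'.clm_apply (hasFDerivAt_const v (t, s))).fderiv]
  rw [hf.ps.pt_eq_fderiv, hf.pt.ps_eq_fderiv]
  simp only [hf.ps_eq_fderiv, hf.pt_eq_fderiv]
  rw [hdir, hdir]
  exact (hf.contDiffAt.isSymmSndFDerivAt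
    (by rw [minSmoothness_of_isRCLikeNormedField]; exact WithTop.coe_le_coe.mpr le_top)) _ _

theorem ps_mul (hf : Smooth2 f) (hg : Smooth2 g) (t s : ℝ) :
    ps (fun t s => f t s * g t s) t s = ps f t s * g t s + f t s * ps g t s :=
  ((hf.hasDerivAt_ps t s).mul (hg.hasDerivAt_ps t s)).deriv

theorem mul_pt_add_mul_pt_eq_zero (hf : Smooth2 f) (hg : Smooth2 g) {c t s : ℝ}
    (h : ∀ τ, f τ s ^ 2 + g τ s ^ 2 = c) : f t s * pt f t s + g t s * pt g t s = 0 := by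
  have hd := ((hf.hasDerivAt_pt_sq t s).fun_add (hg.hasDerivAt_pt_sq t s)).deriv
  rw [funext h, deriv_const] at hd
  linear_combination -hd / 2

end Smooth2

noncomputable def energyFlux (β K : ℝ) (x y θ p : ℝ → ℝ → ℝ) : ℝ → ℝ → ℝ := fun t s =>
  (p t s * ps x t s - K * ps (ps (ps x)) t s) * pt x t s
    + (p t s * ps y t s - K * ps (ps (ps y)) t s) * pt y t s
    + β * ps θ t s * pt θ t s
    + K * (ps (ps x) t s * ps (pt x) t s + ps (ps y) t s * ps (pt y) t s)

section CosseratRod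

variable {x y θ p : ℝ → ℝ → ℝ}

theorem pt_Edens (ρ α β K : ℝ) (hx : Smooth2 x) (hy : Smooth2 y) (hθ : Smooth2 θ) (t s : ℝ) :
    pt (Edens ρ α β K x y θ) t s
      = ρ * (pt x t s * pt (pt x) t s + pt y t s * pt (pt y) t s) + α * pt θ t s * pt (pt θ) t s
        + K * (ps (ps x) t s * ps (ps (pt x)) t s + ps (ps y) t s * ps (ps (pt y)) t s)
        + β * ps θ t s * ps (pt θ) t s := by
  have hkin := ((hx.pt.hasDerivAt_pt_sq t s).fun_add
    (hy.pt.hasDerivAt_pt_sq t s)).const_mul (ρ / 2)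
  have hrot := (hθ.pt.hasDerivAt_pt_sq t s).const_mul (α / 2)
  have hbend := ((hx.ps.ps.hasDerivAt_pt_sq t s).fun_add
    (hy.ps.ps.hasDerivAt_pt_sq t s)).const_mul (K / 2)
  have hshear := (hθ.ps.hasDerivAt_pt_sq t s).const_mul (β / 2)
  refine (((hkin.fun_add hrot).fun_add hbend).fun_add hshear).deriv.trans ?_
  rw [hx.ps.pt_ps_comm, hx.pt_ps_comm, hy.ps.pt_ps_comm, hy.pt_ps_comm, hθ.pt_ps_comm]
  ring

theorem ps_energyFlux (β K : ℝ) (hx : Smooth2 x) (hy : Smooth2 y) (hθ : Smooth2 θ)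
    (hp : Smooth2 p) (t s : ℝ) :
    ps (energyFlux β K x y θ p) t s
      = (ps (fun t s => p t s * ps x t s) t s - K * ps (ps (ps (ps x))) t s) * pt x t s
          + p t s * ps x t s * ps (pt x) t s + K * ps (ps x) t s * ps (ps (pt x)) t s
        + ((ps (fun t s => p t s * ps y t s) t s - K * ps (ps (ps (ps y))) t s) * pt y t s
          + p t s * ps y t s * ps (pt y) t s + K * ps (ps y) t s * ps (ps (pt y)) t s)
        + β * (ps (ps θ) t s * pt θ t s + ps θ t s * ps (pt θ) t s) := by
  have hFx := (((hp.hasDerivAt_ps t s).fun_mul (hx.ps.hasDerivAt_ps t s)).fun_sub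
    ((hx.ps.ps.ps.hasDerivAt_ps t s).const_mul K)).fun_mul (hx.pt.hasDerivAt_ps t s)
  have hFy := (((hp.hasDerivAt_ps t s).fun_mul (hy.ps.hasDerivAt_ps t s)).fun_sub
    ((hy.ps.ps.ps.hasDerivAt_ps t s).const_mul K)).fun_mul (hy.pt.hasDerivAt_ps t s)
  have hFθ := ((hθ.ps.hasDerivAt_ps t s).const_mul β).fun_mul (hθ.pt.hasDerivAt_ps t s)
  have hFK := (((hx.ps.ps.hasDerivAt_ps t s).fun_mul (hx.pt.ps.hasDerivAt_ps t s)).fun_add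
    ((hy.ps.ps.hasDerivAt_ps t s).fun_mul (hy.pt.ps.hasDerivAt_ps t s))).const_mul K
  refine (((hFx.fun_add hFy).fun_add hFθ).fun_add hFK).deriv.trans ?_
  rw [hp.ps_mul hx.ps, hp.ps_mul hy.ps]
  ring

end CosseratRod

theorem local_energy_conservation_free_rod_general
    (ρ α β K ℓ : ℝ)
    (x y θ p : ℝ → ℝ → ℝ)
    (hx : Smooth2 x) (hy : Smooth2 y) (hθ : Smooth2 θ) (hp : Smooth2 p)
    (heqx : ∀ t : ℝ, ∀ s ∈ Set.Icc (0 : ℝ) ℓ,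
      ρ * pt (pt x) t s + K * ps (ps (ps (ps x))) t s
        = ps (fun t' s' => p t' s' * ps x t' s') t s)
    (heqy : ∀ t : ℝ, ∀ s ∈ Set.Icc (0 : ℝ) ℓ,
      ρ * pt (pt y) t s + K * ps (ps (ps (ps y))) t s
        = ps (fun t' s' => p t' s' * ps y t' s') t s)
    (heqθ : ∀ t : ℝ, ∀ s ∈ Set.Icc (0 : ℝ) ℓ,
      α * pt (pt θ) t s - β * ps (ps θ) t s = 0)
    (hinext : ∀ t : ℝ, ∀ s ∈ Set.Icc (0 : ℝ) ℓ, (ps x t s) ^ 2 + (ps y t s) ^ 2 = 1) :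
    ∀ t : ℝ, ∀ s ∈ Set.Icc (0 : ℝ) ℓ,
      pt (Edens ρ α β K x y θ) t s
        = ps (fun t' s' =>
            (p t' s' * ps x t' s' - K * ps (ps (ps x)) t' s') * pt x t' s'
              + (p t' s' * ps y t' s' - K * ps (ps (ps y)) t' s') * pt y t' s'
              + β * ps θ t' s' * pt θ t' s'
              + K * (ps (ps x) t' s' * ps (pt x) t' s' + ps (ps y) t' s' * ps (pt y) t' s')) t s := by
  intro t s hs
  have hinext_dt := hx.ps.mul_pt_add_mul_pt_eq_zero hy.ps (t := t) fun τ => hinext τ s hs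
  rw [hx.pt_ps_comm, hy.pt_ps_comm] at hinext_dt
  change _ = ps (energyFlux β K x y θ p) t s
  rw [pt_Edens ρ α β K hx hy hθ, ps_energyFlux β K hx hy hθ hp]
  linear_combination pt x t s * heqx t s hs + pt y t s * heqy t s hs + pt θ t s * heqθ t s hs
    - p t s * hinext_dt

/-- local energy conservation for the free planar Cosserat rod. -/
theorem local_energy_conservation_free_rod
    (ρ α β K ℓ : ℝ) (hρ : 0 < ρ) (hα : 0 < α) (hβ : 0 < β) (hK : 0 < K) (hℓ : 0 < ℓ)
    (x y θ p : ℝ → ℝ → ℝ)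
    (hx : Smooth2 x) (hy : Smooth2 y) (hθ : Smooth2 θ) (hp : Smooth2 p)
    (heqx : ∀ t : ℝ, ∀ s ∈ Set.Icc (0 : ℝ) ℓ,
      ρ * pt (pt x) t s + K * ps (ps (ps (ps x))) t s
        = ps (fun t' s' => p t' s' * ps x t' s') t s)
    (heqy : ∀ t : ℝ, ∀ s ∈ Set.Icc (0 : ℝ) ℓ,
      ρ * pt (pt y) t s + K * ps (ps (ps (ps y))) t s
        = ps (fun t' s' => p t' s' * ps y t' s') t s)
    (heqθ : ∀ t : ℝ, ∀ s ∈ Set.Icc (0 : ℝ) ℓ,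
      α * pt (pt θ) t s - β * ps (ps θ) t s = 0)
    (hinext : ∀ t : ℝ, ∀ s ∈ Set.Icc (0 : ℝ) ℓ, (ps x t s) ^ 2 + (ps y t s) ^ 2 = 1) :
    ∀ t : ℝ, ∀ s ∈ Set.Icc (0 : ℝ) ℓ,
      pt (Edens ρ α β K x y θ) t s
        = ps (fun t' s' =>
            (p t' s' * ps x t' s' - K * ps (ps (ps x)) t' s') * pt x t' s'
              + (p t' s' * ps y t' s' - K * ps (ps (ps y)) t' s') * pt y t' s'
              + β * ps θ t' s' * pt θ t' s'
              + K * (ps (ps x) t' s' * ps (pt x) t' s' + ps (ps y) t' s' * ps (pt y) t' s')) t s :=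
  local_energy_conservation_free_rod_general ρ α β K ℓ x y θ p hx hy hθ hp heqx heqy heqθ hinext
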